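/- For A ∈ SL(2,ℝ) with eigenvalues λ, 1/λ, the translation length of the Möbius action of A on the hyperbolic upper half-plane equals 2·sqrt(w(P_A)), where P_A is the characteristic polynomial of A and w denotes the Jensen square sum. -/

import Mathlib

open UpperHalfPlane Matrix MatrixGroups Polynomial

/-- The Jensen square sum of a (monic) complex polynomial:
the sum of `log² max(1, |λ|)` over its roots with multiplicity. -/
noncomputable def jensenSquareSum (Q : Polynomial ℂ) : ℝ :=
  (Q.roots.map fun l => (Real.log (max 1 ‖l‖)) ^ 2).sum

/-!
Write `A = !![a, b; c, d]`, `t = a + d` and `z = x + iy`. Since `z - A z = q(z) / (c z + d)` with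
`q(z) = c z² + (d - a) z - b` and `Im (A z) = y / |c z + d|²`,
`sinh² (d(z, A z) / 2) = |q(z)|² / (4 y²) = (t² - 4) / 4 + (c |z|² + (d - a) x - b)² / (4 y²)`,
and the infimum of this over `ℍ` is `max 0 (t² - 4) / 4`. On the other side, the roots `λ, λ⁻¹` of
`X² - t X + 1` give `w = log² |λ|`, and `sinh (log |λ|) = (|λ| - |λ|⁻¹) / 2`, whose square is
`max 0 (t² - 4) / 4` by the parallelogram law applied to `λ ± λ⁻¹`.
-/

open Real

lemma log_max_one_sq_add_log_max_one_inv_sq {r : ℝ} (hr : 0 < r) :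
    log (max 1 r) ^ 2 + log (max 1 r⁻¹) ^ 2 = log r ^ 2 := by
  rcases le_total 1 r with h | h
  · rw [max_eq_right h, max_eq_left (inv_le_one_of_one_le₀ h), log_one]; ring
  · rw [max_eq_left h, max_eq_right ((one_le_inv₀ hr).2 h), log_one, log_inv]; ring

lemma jensenSquareSum_X_sub_C_mul_X_sub_C {l m : ℂ} (h : l * m = 1) :
    jensenSquareSum ((X - C l) * (X - C m)) = log ‖l‖ ^ 2 := by
  have hl : 0 < ‖l‖ := norm_pos_iff.2 (left_ne_zero_of_mul_eq_one h)
  rw [jensenSquareSum, roots_mul (mul_ne_zero (X_sub_C_ne_zero l) (X_sub_C_ne_zero m)),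
    roots_X_sub_C, roots_X_sub_C, Multiset.singleton_add, Multiset.map_cons, Multiset.sum_cons,
    Multiset.map_singleton, Multiset.sum_singleton, eq_inv_of_mul_eq_one_right h, norm_inv,
    log_max_one_sq_add_log_max_one_inv_sq hl]

lemma norm_sub_norm_sq_of_add_eq_of_mul_eq_one {l m : ℂ} {t : ℝ} (hs : l + m = t)
    (hp : l * m = 1) : (‖l‖ - ‖m‖) ^ 2 = max 0 (t ^ 2 - 4) := by
  have hnorm : ‖l‖ * ‖m‖ = 1 := by rw [← norm_mul, hp, norm_one]
  have hdiff : ‖l - m‖ ^ 2 = |t ^ 2 - 4| := by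
    rw [← norm_pow, show (l - m) ^ 2 = (l + m) ^ 2 - 4 * (l * m) by ring, hs, hp, mul_one]
    have := Complex.norm_real (t ^ 2 - 4)
    push_cast at this
    rw [this, Real.norm_eq_abs]
  have hpar := parallelogram_law_with_norm ℝ l m
  rw [hs, Complex.norm_real, Real.norm_eq_abs, sq_abs, hdiff] at hpar
  rcases le_total 0 (t ^ 2 - 4) with h | h
  · rw [abs_of_nonneg h] at hpar; rw [max_eq_right h]; linear_combination -hpar / 2 - 2 * hnorm
  · rw [abs_of_nonpos h] at hpar; rw [max_eq_left h]; linear_combination -hpar / 2 - 2 * hnorm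

lemma abs_log_eq_arsinh {r : ℝ} (hr : 0 < r) : |log r| = arsinh |(r - r⁻¹) / 2| := by
  rw [← sinh_log hr]
  rcases le_total 0 (log r) with h | h
  · rw [abs_of_nonneg h, abs_of_nonneg (sinh_nonneg_iff.2 h), arsinh_sinh]
  · rw [abs_of_nonpos h, abs_of_nonpos (sinh_nonpos_iff.2 h), ← sinh_neg, arsinh_sinh]

lemma sqrt_jensenSquareSum_X_sq_sub_C_mul_X_add_one (t : ℝ) :
    √(jensenSquareSum (X ^ 2 - C (t : ℂ) * X + 1)) = arsinh √(max 0 (t ^ 2 - 4) / 4) := by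
  obtain ⟨s, hs⟩ := IsAlgClosed.exists_eq_mul_self ((t : ℂ) ^ 2 - 4)
  have hsum : (t + s) / 2 + (t - s) / 2 = (t : ℂ) := by ring
  have hprod : (t + s) / 2 * ((t - s) / 2) = (1 : ℂ) := by linear_combination hs / 4
  generalize (t + s) / 2 = l, (t - s) / 2 = m at hsum hprod
  have hfac : X ^ 2 - C (t : ℂ) * X + 1 = (X - C l) * (X - C m) := by
    rw [← hsum, ← C_1, ← hprod, C_add, C_mul]; ring
  have hl : 0 < ‖l‖ := norm_pos_iff.2 (left_ne_zero_of_mul_eq_one hprod)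
  rw [hfac, jensenSquareSum_X_sub_C_mul_X_sub_C hprod, sqrt_sq_eq_abs, abs_log_eq_arsinh hl,
    ← norm_sub_norm_sq_of_add_eq_of_mul_eq_one hsum hprod, eq_inv_of_mul_eq_one_right hprod,
    norm_inv, ← sqrt_sq_eq_abs, div_pow]
  norm_num

lemma det_fin_two_coe_SL2 (A : SL(2, ℝ)) : A 0 0 * A 1 1 - A 0 1 * A 1 0 = 1 := by
  rw [← det_fin_two]; exact A.det_coe

lemma charpoly_map_SL2 (A : SL(2, ℝ)) :
    (charpoly (A : Matrix (Fin 2) (Fin 2) ℝ)).map (algebraMap ℝ ℂ) =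
      X ^ 2 - C ((A 0 0 + A 1 1 : ℝ) : ℂ) * X + 1 := by
  rw [charpoly_fin_two, A.det_coe, trace_fin_two]
  simp

lemma normSq_quadratic {a b c d : ℝ} (h : a * d - b * c = 1) (z : ℂ) :
    Complex.normSq (c * z ^ 2 + (d - a) * z - b) =
      ((a + d) ^ 2 - 4) * z.im ^ 2 + (c * (z.re ^ 2 + z.im ^ 2) + (d - a) * z.re - b) ^ 2 := by
  simp only [Complex.normSq_apply, Complex.sub_re, Complex.sub_im, Complex.add_re, Complex.add_im,
    Complex.mul_re, Complex.mul_im, Complex.ofReal_re, Complex.ofReal_im, pow_two]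
  linear_combination (-4 * z.im ^ 2) * h

lemma sinh_half_dist_smul_sq_eq_normSq (A : SL(2, ℝ)) (z : ℍ) :
    sinh (dist z (A • z) / 2) ^ 2 =
      Complex.normSq (A 1 0 * (z : ℂ) ^ 2 + (A 1 1 - A 0 0) * z - A 0 1) / (4 * z.im ^ 2) := by
  have hw : (A 1 0 * z + A 1 1 : ℂ) ≠ 0 := denom_ne_zero (SpecialLinearGroup.mapGL ℝ A) z
  have hAz : ((A • z : ℍ) : ℂ) = (A 0 0 * z + A 0 1) / (A 1 0 * z + A 1 1) := by
    simpa using coe_specialLinearGroup_apply A z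
  have him : (A • z).im = z.im / Complex.normSq (A 1 0 * z + A 1 1) := by
    rw [← coe_im, hAz, Complex.div_im, ← sub_div]
    congr 1
    simp only [Complex.add_im, Complex.mul_im, Complex.ofReal_re, Complex.ofReal_im, Complex.add_re,
      Complex.mul_re, coe_re, coe_im, zero_mul, add_zero, sub_zero]
    linear_combination z.im * det_fin_two_coe_SL2 A
  have hsub : (z : ℂ) - (A • z : ℍ) =
      (A 1 0 * (z : ℂ) ^ 2 + (A 1 1 - A 0 0) * z - A 0 1) / (A 1 0 * z + A 1 1) := by
    rw [hAz, sub_div' hw]; ring_nf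
  rw [← (dist_eq_iff_eq_sq_sinh dist_nonneg).1 rfl, him, Complex.dist_eq, Complex.sq_norm, hsub,
    Complex.normSq_div]
  have hw' := Complex.normSq_pos.2 hw
  have hz := z.im_pos
  field_simp

lemma sinh_half_dist_smul_sq (A : SL(2, ℝ)) (z : ℍ) :
    sinh (dist z (A • z) / 2) ^ 2 = ((A 0 0 + A 1 1) ^ 2 - 4) / 4 +
      ((A 1 0 * (z.re ^ 2 + z.im ^ 2) + (A 1 1 - A 0 0) * z.re - A 0 1) / (2 * z.im)) ^ 2 := by
  rw [sinh_half_dist_smul_sq_eq_normSq, normSq_quadratic (det_fin_two_coe_SL2 A), coe_re, coe_im]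
  have hz := z.im_pos
  field_simp
  ring

lemma exists_sq_div_lt {a b c d : ℝ} (h : a * d - b * c = 1) {ε : ℝ} (hε : 0 < ε) :
    ∃ x y : ℝ, 0 < y ∧
      ((c * (x ^ 2 + y ^ 2) + (d - a) * x - b) / (2 * y)) ^ 2 < max 0 (4 - (a + d) ^ 2) / 4 + ε := by
  have hM : 0 ≤ max 0 (4 - (a + d) ^ 2) := le_max_left _ _
  rcases eq_or_ne c 0 with rfl | hc
  -- `x = b / (d - a)` kills the numerator unless `a = d`; then it is `-b` and a large `y` works.
  · refine ⟨b / (d - a), b ^ 2 / ε + 1, by positivity, ?_⟩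
    have hR : ((d - a) * (b / (d - a)) - b) ^ 2 ≤ b ^ 2 := by
      rcases eq_or_ne (d - a) 0 with had | had
      · simp [had]
      · simpa [mul_div_cancel₀ _ had] using sq_nonneg b
    have hy : b ^ 2 < ε * (2 * (b ^ 2 / ε + 1)) ^ 2 := by
      have : ε * (b ^ 2 / ε) = b ^ 2 := by field_simp
      nlinarith [sq_nonneg b, sq_nonneg (b ^ 2 / ε), div_nonneg (sq_nonneg b) hε.le]
    rw [zero_mul, zero_add, div_pow, div_lt_iff₀ (by positivity)]
    nlinarith
  -- Over the real part `x = (a - d) / (2c)` of the fixed points the numerator is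
  -- `(4c²y² - D) / (4c)`, and the height `4c²y² = |D| + ε` is nearly optimal whatever the sign of `D`.
  · set D := (a + d) ^ 2 - 4
    set y := √(|D| + ε) / (2 * |c|)
    have hy : 0 < y := by positivity
    have hcy : 4 * c ^ 2 * y ^ 2 = |D| + ε := by
      rw [div_pow, mul_pow, sq_sqrt (by positivity), sq_abs]; field_simp; ring
    clear_value y
    have hx : 2 * c * ((a - d) / (2 * c)) = a - d := mul_div_cancel₀ _ (mul_ne_zero two_ne_zero hc)
    generalize (a - d) / (2 * c) = x at hx
    refine ⟨x, y, hy, ?_⟩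
    have hR : 4 * c * (c * (x ^ 2 + y ^ 2) + (d - a) * x - b) = |D| + ε - D := by
      linear_combination (2 * c * x - (a - d)) * hx + 4 * h + hcy
    have key : (4 * c * (c * (x ^ 2 + y ^ 2) + (d - a) * x - b)) ^ 2
        < 16 * (max 0 (4 - (a + d) ^ 2) / 4 + ε) * (|D| + ε) := by
      rw [hR]
      rcases le_total 0 D with hD | hD
      · rw [abs_of_nonneg hD]; nlinarith
      · rw [abs_of_nonpos hD, max_eq_right (by linarith)]; nlinarith
    rw [div_pow, div_lt_iff₀ (by positivity)]
    rw [← hcy] at key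
    have hc2 : 0 < 16 * c ^ 2 := by positivity
    nlinarith

lemma iInf_sinh_half_dist_smul_sq (A : SL(2, ℝ)) :
    ⨅ z : ℍ, sinh (dist z (A • z) / 2) ^ 2 = max 0 ((A 0 0 + A 1 1) ^ 2 - 4) / 4 := by
  have hmax : ((A 0 0 + A 1 1) ^ 2 - 4) / 4 + max 0 (4 - (A 0 0 + A 1 1) ^ 2) / 4 =
      max 0 ((A 0 0 + A 1 1) ^ 2 - 4) / 4 := by
    rcases le_total 0 ((A 0 0 + A 1 1) ^ 2 - 4) with h | h
    · rw [max_eq_left (by linarith), max_eq_right h]; ring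
    · rw [max_eq_right (by linarith), max_eq_left h]; ring
  apply ciInf_eq_of_forall_ge_of_forall_gt_exists_lt
  · intro z
    have h0 := sq_nonneg (sinh (dist z (A • z) / 2))
    rw [sinh_half_dist_smul_sq] at h0 ⊢
    rw [← max_div_div_right zero_le_four, zero_div]
    exact max_le h0 (le_add_of_nonneg_right (sq_nonneg _))
  · intro w hw
    obtain ⟨x, y, hy, hlt⟩ := exists_sq_div_lt (det_fin_two_coe_SL2 A) (sub_pos.2 hw)
    refine ⟨⟨⟨x, y⟩, hy⟩, ?_⟩
    rw [sinh_half_dist_smul_sq]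
    change _ + ((_ * (x ^ 2 + y ^ 2) + _ * x - _) / (2 * y)) ^ 2 < w
    linarith

lemma two_mul_arsinh_sqrt_sinh_half_sq {r : ℝ} (hr : 0 ≤ r) :
    2 * arsinh √(sinh (r / 2) ^ 2) = r := by
  rw [sqrt_sq (sinh_nonneg_iff.2 (by positivity)), arsinh_sinh]; ring

/-- The translation length of any element of `SL(2, ℝ)` on the hyperbolic upper
half-plane equals `2 √(w(P_A))`, where `P_A` is the characteristic polynomial of `A`
and `w` is the Jensen square sum. -/
theorem translationLength_SL2_eq_two_sqrt_jensen (A : SL(2, ℝ)) :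
    (⨅ z : ℍ, dist z (A • z)) =
      2 * Real.sqrt (jensenSquareSum
        ((Matrix.charpoly (A : Matrix (Fin 2) (Fin 2) ℝ)).map (algebraMap ℝ ℂ))) := by
  have hbdd : BddBelow (Set.range fun z : ℍ ↦ sinh (dist z (A • z) / 2) ^ 2) :=
    ⟨0, by rintro _ ⟨z, rfl⟩; positivity⟩
  have hmono : Monotone fun x ↦ 2 * arsinh √x :=
    (arsinh_strictMono.monotone.comp fun _ _ ↦ sqrt_le_sqrt).const_mul zero_le_two
  calc (⨅ z : ℍ, dist z (A • z))
      = ⨅ z : ℍ, 2 * arsinh √(sinh (dist z (A • z) / 2) ^ 2) := by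
        simp only [two_mul_arsinh_sqrt_sinh_half_sq dist_nonneg]
    _ = 2 * arsinh √(⨅ z : ℍ, sinh (dist z (A • z) / 2) ^ 2) :=
        (hmono.map_ciInf_of_continuousAt (by fun_prop) hbdd).symm
    _ = 2 * √(jensenSquareSum
          ((charpoly (A : Matrix (Fin 2) (Fin 2) ℝ)).map (algebraMap ℝ ℂ))) := by
        rw [iInf_sinh_half_dist_smul_sq, charpoly_map_SL2,
          sqrt_jensenSquareSum_X_sq_sub_C_mul_X_add_one]
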